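/- Uniqueness: if a value φ (a map from partition-function games to ℝ^N) satisfies Efficiency, Symmetry, Additivity, and the Null-Player Axiom with respect to α-marginality, then φ = φ^α; i.e., these four axioms determine a unique value on partition-function games. -/

import Mathlib

open Finset

open scoped Classical

/-- A partition of the player set `Fin n`; following the paper's convention,
`∅` is a member of every partition. -/
def IsPartition {n : ℕ} (P : Finset (Finset (Fin n))) : Prop :=
  ∅ ∈ P ∧ ∀ a : Fin n, ∃! B : Finset (Fin n), B ∈ P ∧ a ∈ B

/-- The set `𝒫` of all partitions of `Fin n`. -/
noncomputable def allPartitions (n : ℕ) : Finset (Finset (Finset (Fin n))) :=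
  Finset.univ.filter IsPartition

/-- `C_i^π`: the set of players appearing after `i` in the ordering `π`. -/
def Cafter {n : ℕ} (π : Equiv.Perm (Fin n)) (i : Fin n) : Finset (Fin n) :=
  Finset.univ.filter fun j => π.symm i < π.symm j

/-- `P_{[S]}` : the partition obtained from `P` by merging all members of `S`
into a single coalition. -/
def pmerge {n : ℕ} (P : Finset (Finset (Fin n))) (S : Finset (Fin n)) :
    Finset (Finset (Fin n)) :=
  P.image (· \ S) ∪ {S}

/-- `τ_i^T(P)` : the partition obtained from `P` by transferring `i` from its
coalition to the coalition `T` (taking `T = ∅` means that `i` forms a new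
singleton coalition). -/
def moveTo {n : ℕ} (P : Finset (Finset (Fin n))) (i : Fin n) (T : Finset (Fin n)) :
    Finset (Finset (Fin n)) :=
  ((P.erase T).image fun B => B.erase i) ∪ {insert i T} ∪ {∅}

/-- A partition-function game: a real value for every (embedded) coalition. -/
abbrev Game (n : ℕ) := Finset (Fin n) → Finset (Finset (Fin n)) → ℝ

/-- A system of weights `α_i(S, P)` (meaningful for `i ∉ S`). -/
abbrev Weights (n : ℕ) := Fin n → Finset (Fin n) → Finset (Finset (Fin n)) → ℝ

/-- The partition `{N, ∅}` in which the grand coalition is embedded. -/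
def grandPart (n : ℕ) : Finset (Finset (Fin n)) := {Finset.univ, ∅}

/-- Normalization: for every embedded coalition `(S, P)` with `i ∈ S`,
`∑_{T ∈ P_{−S}} α_i(S_{−i}, τ_i^T(P)) = 1`. -/
def Normalized {n : ℕ} (w : Weights n) : Prop :=
  ∀ (i : Fin n) (S : Finset (Fin n)) (P : Finset (Finset (Fin n))),
    IsPartition P → S ∈ P → i ∈ S →
      ∑ T ∈ P.erase S, w i (S.erase i) (moveTo P i T) = 1

/-- Weights take values in `[0, 1]`. -/
def InRange {n : ℕ} (w : Weights n) : Prop :=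
  ∀ (i : Fin n) (S : Finset (Fin n)) (P : Finset (Finset (Fin n))),
    i ∉ S → 0 ≤ w i S P ∧ w i S P ≤ 1

/-- `pr^α_π(P) = ∏_{i ∈ N} α_i(C_i^π, P_{[C_i^π]})`. -/
noncomputable def pr {n : ℕ} (w : Weights n) (π : Equiv.Perm (Fin n))
    (P : Finset (Finset (Fin n))) : ℝ :=
  ∏ i : Fin n, w i (Cafter π i) (pmerge P (Cafter π i))

/-- The extended Shapley value `φ^α` (formula (1) of the paper). -/
noncomputable def esv {n : ℕ} (w : Weights n) (v : Game n) (i : Fin n) : ℝ :=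
  ((n.factorial : ℝ))⁻¹ * ∑ π : Equiv.Perm (Fin n), ∑ P ∈ allPartitions n,
    pr w π P *
      (v (insert i (Cafter π i)) (pmerge P (insert i (Cafter π i))) -
        v (Cafter π i) (pmerge P (Cafter π i)))

/-- The `α`-marginal contribution `[mc^α_i(v)](S, P)`. -/
noncomputable def mc {n : ℕ} (w : Weights n) (v : Game n) (i : Fin n)
    (S : Finset (Fin n)) (P : Finset (Finset (Fin n))) : ℝ :=
  ∑ T ∈ P.erase S, w i (S.erase i) (moveTo P i T) * (v S P - v (S.erase i) (moveTo P i T))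

/-- A genuine partition-function game: it vanishes off embedded coalitions
(and on the empty coalition). -/
def IsGame {n : ℕ} (v : Game n) : Prop :=
  ∀ S P, ¬ (IsPartition P ∧ S ∈ P ∧ S ≠ ∅) → v S P = 0

/-- The simple game `e^{(S₀, P₀)}`. -/
noncomputable def sgame {n : ℕ} (S₀ : Finset (Fin n)) (P₀ : Finset (Finset (Fin n))) :
    Game n :=
  fun S P => if S = S₀ ∧ P = P₀ then 1 else 0

/-- The permuted game `π(v)`, with `π(v)(S, P) = v(π(S), π(P))`. -/
def permGame {n : ℕ} (π : Equiv.Perm (Fin n)) (v : Game n) : Game n :=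
  fun S P => v (S.image π) (P.image (Finset.image π))


/-!
Both `φ` and `φ^α` satisfy the four axioms, so their difference `ψ` is an additive, symmetric
value with `∑ i, ψ v i = 0` that vanishes at α-null players, and it suffices to show `ψ = 0`.
This goes by downward induction on `r`: if `mc^α_i(v)` vanishes on coalitions of size `< r`,
subtract from `v` the game `u = ∑ mc^α_i(v)(S, P) • e^{(S, P)}` over the embedded coalitions
`(S, P)` with `i ∈ S` and `|S| = r`. Since `mc^α_i(e^{(S₀, P₀)})(S, P) = [(S, P) = (S₀, P₀)]`
whenever `|S| ≤ |S₀|`, the marginals of `v - u` vanish below `r + 1`. In each `e^{(S₀, P₀)}` the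
players outside `S₀` are covered by the induction hypothesis, the players of `S₀` are exchanged
by transpositions fixing the game, and efficiency forces their common value to be `0`.

That `φ^α` satisfies the axioms rests on reading `pr^α_σ` as the law of a Markov chain: the
partitions `P_{[C]}`, for `C` running through the final segments of `σ` from `N` down to `∅`,
move from state `Q` to `τ_i^T(Q)` with probability `α_i(C_{-i}, τ_i^T(Q))`, where `i` is the
player leaving `C`. Summing out the future of the chain gives total mass `1`, and conditioning on
its past turns the expected marginal contribution of `i` into `mc^α_i(v)` at the current state.
-/

namespace IsPartition

variable {n : ℕ} {P : Finset (Finset (Fin n))}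

lemma eq_of_mem (hP : IsPartition P) {B B' : Finset (Fin n)} {a : Fin n}
    (hB : B ∈ P) (hB' : B' ∈ P) (ha : a ∈ B) (ha' : a ∈ B') : B = B' :=
  (hP.2 a).unique ⟨hB, ha⟩ ⟨hB', ha'⟩

lemma exists_mem (hP : IsPartition P) (a : Fin n) : ∃ B ∈ P, a ∈ B :=
  (hP.2 a).exists

lemma notMem_of_ne (hP : IsPartition P) {S T : Finset (Fin n)} {i : Fin n}
    (hS : S ∈ P) (hi : i ∈ S) (hT : T ∈ P) (hne : T ≠ S) : i ∉ T :=
  fun hiT => hne (hP.eq_of_mem hT hS hiT hi)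

lemma sdiff_eq_self (hP : IsPartition P) {S T : Finset (Fin n)}
    (hS : S ∈ P) (hT : T ∈ P) (hne : T ≠ S) : T \ S = T :=
  sdiff_eq_self_of_disjoint <| disjoint_left.2 fun _ haT haS => hne (hP.eq_of_mem hT hS haT haS)

lemma image (hP : IsPartition P) (π : Equiv.Perm (Fin n)) :
    IsPartition (P.image (Finset.image π)) := by
  refine ⟨mem_image.2 ⟨∅, hP.1, image_empty _⟩, fun a => ?_⟩
  obtain ⟨B, hB, haB⟩ := hP.exists_mem (π.symm a)
  refine ⟨B.image π, ⟨mem_image_of_mem _ hB, mem_image.2 ⟨_, haB, by simp⟩⟩, ?_⟩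
  rintro _ ⟨hX, haX⟩
  obtain ⟨B', hB', rfl⟩ := mem_image.1 hX
  obtain ⟨b, hb, rfl⟩ := mem_image.1 haX
  rw [hP.eq_of_mem hB' hB hb (by simpa using haB)]

end IsPartition

variable {n : ℕ}

lemma mem_allPartitions {P : Finset (Finset (Fin n))} :
    P ∈ allPartitions n ↔ IsPartition P := by
  simp [allPartitions]

lemma isPartition_grandPart : IsPartition (grandPart n) := by
  refine ⟨by simp [grandPart], fun a => ⟨univ, by simp [grandPart], ?_⟩⟩
  rintro X ⟨hX, haX⟩
  simp only [grandPart, mem_insert, mem_singleton] at hX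
  rcases hX with rfl | rfl
  · rfl
  · simp at haX

section pmerge

variable {P : Finset (Finset (Fin n))}

lemma mem_pmerge_self (P : Finset (Finset (Fin n))) (D : Finset (Fin n)) :
    D ∈ pmerge P D := by simp [pmerge]

lemma sdiff_mem_pmerge {B : Finset (Fin n)} (hB : B ∈ P) (D : Finset (Fin n)) :
    B \ D ∈ pmerge P D :=
  mem_union_left _ (mem_image_of_mem _ hB)

lemma IsPartition.pmerge (hP : IsPartition P) (D : Finset (Fin n)) :
    IsPartition (pmerge P D) := by
  refine ⟨by simpa using sdiff_mem_pmerge hP.1 D, fun a => ?_⟩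
  by_cases haD : a ∈ D
  · refine ⟨D, ⟨mem_pmerge_self P D, haD⟩, ?_⟩
    rintro X ⟨hX, haX⟩
    simp only [_root_.pmerge, mem_union, mem_image, mem_singleton] at hX
    rcases hX with ⟨B, -, rfl⟩ | rfl
    · exact absurd haD (mem_sdiff.1 haX).2
    · rfl
  · obtain ⟨B, hB, haB⟩ := hP.exists_mem a
    refine ⟨B \ D, ⟨sdiff_mem_pmerge hB D, mem_sdiff.2 ⟨haB, haD⟩⟩, ?_⟩
    rintro X ⟨hX, haX⟩
    simp only [_root_.pmerge, mem_union, mem_image, mem_singleton] at hX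
    rcases hX with ⟨B', hB', rfl⟩ | rfl
    · rw [hP.eq_of_mem hB' hB (mem_sdiff.1 haX).1 haB]
    · exact absurd haX haD

lemma pmerge_empty (h : ∅ ∈ P) : pmerge P ∅ = P := by
  ext X
  simp only [pmerge, sdiff_empty, image_id', mem_union, mem_singleton]
  exact ⟨fun h' => h'.elim id (· ▸ h), Or.inl⟩

lemma pmerge_univ (h : ∅ ∈ P) : pmerge P univ = grandPart n := by
  ext X
  simp only [pmerge, grandPart, sdiff_eq_empty_iff_subset.2 (subset_univ _), mem_union,
    mem_image, mem_singleton, mem_insert]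
  exact ⟨fun h' => h'.elim (fun ⟨_, _, hX⟩ => Or.inr hX.symm) Or.inl,
    fun h' => h'.elim Or.inr fun hX => Or.inl ⟨∅, h, hX.symm⟩⟩

lemma pmerge_pmerge (h : ∅ ∈ P) {D D' : Finset (Fin n)} (hDD : D ⊆ D') :
    pmerge (pmerge P D) D' = pmerge P D' := by
  have hsub (B : Finset (Fin n)) : (B \ D) \ D' = B \ D' := by
    rw [sdiff_sdiff_left, sup_eq_right.2 hDD]
  ext X
  simp only [pmerge, image_union, image_singleton, image_image, Function.comp_def, hsub,
    sdiff_eq_empty_iff_subset.2 hDD, mem_union, mem_image, mem_singleton]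
  constructor
  · rintro ((⟨B, hB, rfl⟩ | rfl) | rfl)
    · exact Or.inl ⟨B, hB, rfl⟩
    · exact Or.inl ⟨∅, h, empty_sdiff _⟩
    · exact Or.inr rfl
  · rintro (⟨B, hB, rfl⟩ | rfl)
    · exact Or.inl (Or.inl ⟨B, hB, rfl⟩)
    · exact Or.inr rfl

lemma pmerge_image (π : Equiv.Perm (Fin n)) (P : Finset (Finset (Fin n)))
    (S : Finset (Fin n)) :
    pmerge (P.image (Finset.image π)) (S.image π) = (pmerge P S).image (Finset.image π) := by
  simp only [pmerge, image_union, image_singleton, image_image]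
  congr 1
  exact image_congr fun B _ => (image_sdiff B S π.injective).symm

end pmerge

section moveTo

variable {Q : Finset (Finset (Fin n))} {i : Fin n} {S T X : Finset (Fin n)}

lemma mem_moveTo :
    X ∈ moveTo Q i T ↔ (∃ B ∈ Q.erase T, B.erase i = X) ∨ X = insert i T ∨ X = ∅ := by
  simp only [moveTo, mem_union, mem_image, mem_singleton, or_assoc]

lemma insert_mem_moveTo (Q : Finset (Finset (Fin n))) (i : Fin n) (T : Finset (Fin n)) :
    insert i T ∈ moveTo Q i T := mem_moveTo.2 (Or.inr (Or.inl rfl))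

lemma empty_mem_moveTo (Q : Finset (Finset (Fin n))) (i : Fin n) (T : Finset (Fin n)) :
    ∅ ∈ moveTo Q i T := mem_moveTo.2 (Or.inr (Or.inr rfl))

lemma erase_mem_moveTo (hS : S ∈ Q) (hne : S ≠ T) (i : Fin n) :
    S.erase i ∈ moveTo Q i T :=
  mem_moveTo.2 (Or.inl ⟨S, mem_erase.2 ⟨hne, hS⟩, rfl⟩)

lemma eq_insert_of_mem_moveTo (hX : X ∈ moveTo Q i T) (hiX : i ∈ X) : X = insert i T := by
  rcases mem_moveTo.1 hX with ⟨B, -, rfl⟩ | rfl | rfl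
  · exact absurd hiX (notMem_erase i B)
  · rfl
  · exact absurd hiX (notMem_empty i)

lemma eq_of_moveTo_eq {T' : Finset (Fin n)} (hT : i ∉ T) (hT' : i ∉ T')
    (h : moveTo Q i T = moveTo Q i T') : T = T' := by
  have := eq_insert_of_mem_moveTo (h ▸ insert_mem_moveTo Q i T) (mem_insert_self i T)
  rw [← erase_insert hT, this, erase_insert hT']

lemma IsPartition.moveTo (hQ : IsPartition Q) (hTQ : T ∈ Q) :
    IsPartition (moveTo Q i T) := by
  refine ⟨empty_mem_moveTo Q i T, fun a => ?_⟩
  by_cases hai : a = i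
  · subst hai
    exact ⟨insert a T, ⟨insert_mem_moveTo Q a T, mem_insert_self a T⟩,
      fun X hX => eq_insert_of_mem_moveTo hX.1 hX.2⟩
  obtain ⟨B, hB, haB⟩ := hQ.exists_mem a
  by_cases hBT : B = T
  · subst hBT
    refine ⟨insert i B, ⟨insert_mem_moveTo Q i B, mem_insert_of_mem haB⟩, ?_⟩
    rintro X ⟨hX, haX⟩
    rcases mem_moveTo.1 hX with ⟨B', hB', rfl⟩ | rfl | rfl
    · exact absurd (hQ.eq_of_mem (mem_erase.1 hB').2 hB (mem_of_mem_erase haX) haB)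
        (mem_erase.1 hB').1
    · rfl
    · exact absurd haX (notMem_empty a)
  · refine ⟨B.erase i, ⟨erase_mem_moveTo hB hBT i, mem_erase.2 ⟨hai, haB⟩⟩, ?_⟩
    rintro X ⟨hX, haX⟩
    rcases mem_moveTo.1 hX with ⟨B', hB', rfl⟩ | rfl | rfl
    · rw [hQ.eq_of_mem (mem_erase.1 hB').2 hB (mem_of_mem_erase haX) haB]
    · exact absurd (hQ.eq_of_mem hB hTQ haB (mem_of_mem_insert_of_ne haX hai)) hBT
    · exact absurd haX (notMem_empty a)

end moveTo

section merge_move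

variable {P Q : Finset (Finset (Fin n))} {i : Fin n}

lemma sdiff_erase_of_notMem {B D : Finset (Fin n)} (h : i ∉ B) : B \ D.erase i = B \ D := by
  grind

lemma pmerge_erase_eq_moveTo (hP : IsPartition P) {D B : Finset (Fin n)} (hiD : i ∈ D)
    (hB : B ∈ P) (hiB : i ∈ B) :
    pmerge P (D.erase i) = moveTo (pmerge P D) i (B \ D) := by
  have hiB' : ∀ B' ∈ P, i ∈ B' → B' = B := fun B' hB' hi => hP.eq_of_mem hB' hB hi hiB
  ext X
  simp only [pmerge, mem_moveTo, mem_union, mem_image, mem_singleton, mem_erase]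
  constructor
  · rintro (⟨B', hB', rfl⟩ | rfl)
    · by_cases hi : i ∈ B'
      · obtain rfl := hiB' B' hB' hi
        exact Or.inr (Or.inl (sdiff_erase hi))
      rw [sdiff_erase_of_notMem hi]
      by_cases hBB' : B' \ D = B \ D
      -- a block `B' ∌ i` collides with the target `B \ D` only if both are empty
      · refine Or.inr (Or.inr (eq_empty_of_forall_notMem fun a ha => hi ?_))
        have ha' : a ∈ B \ D := hBB' ▸ ha
        exact hP.eq_of_mem hB hB' (mem_sdiff.1 ha').1 (mem_sdiff.1 ha).1 ▸ hiB
      · exact Or.inl ⟨B' \ D, ⟨hBB', Or.inl ⟨B', hB', rfl⟩⟩,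
          erase_eq_of_notMem fun h => (mem_sdiff.1 h).2 hiD⟩
    · refine Or.inl ⟨D, ⟨fun h => ?_, Or.inr rfl⟩, rfl⟩
      exact (mem_sdiff.1 (h ▸ hiD)).2 hiD
  · rintro (⟨Y, ⟨hYB, ⟨B', hB', rfl⟩ | rfl⟩, rfl⟩ | rfl | rfl)
    · have hi : i ∉ B' := fun hi => hYB (by rw [hiB' B' hB' hi])
      refine Or.inl ⟨B', hB', ?_⟩
      rw [sdiff_erase_of_notMem hi, erase_eq_of_notMem fun h => (mem_sdiff.1 h).2 hiD]
    · exact Or.inr rfl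
    · exact Or.inl ⟨B, hB, sdiff_erase hiB⟩
    · exact Or.inl ⟨∅, hP.1, empty_sdiff _⟩

lemma pmerge_moveTo (hQ : IsPartition Q) {S T : Finset (Fin n)} (hS : S ∈ Q) (hi : i ∈ S)
    (hT : T ∈ Q.erase S) : pmerge (moveTo Q i T) S = Q := by
  obtain ⟨hTS, hTQ⟩ := mem_erase.1 hT
  have hinsert : insert i T \ S = T := by
    rw [insert_sdiff_of_mem _ hi, hQ.sdiff_eq_self hS hTQ hTS]
  have hrest : ∀ B ∈ Q, B ≠ S → B.erase i \ S = B := fun B hB hBS => by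
    rw [erase_eq_of_notMem (hQ.notMem_of_ne hS hi hB hBS), hQ.sdiff_eq_self hS hB hBS]
  ext X
  simp only [pmerge, mem_union, mem_image, mem_singleton]
  constructor
  · rintro (⟨Y, hY, rfl⟩ | rfl)
    · rcases mem_moveTo.1 hY with ⟨B, hB, rfl⟩ | rfl | rfl
      · by_cases hBS : B = S
        · rw [hBS, sdiff_eq_empty_iff_subset.2 (erase_subset i S)]
          exact hQ.1
        · rw [hrest B (mem_erase.1 hB).2 hBS]
          exact (mem_erase.1 hB).2
      · rwa [hinsert]
      · rw [empty_sdiff]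
        exact hQ.1
    · exact hS
  · intro hX
    by_cases hXS : X = S
    · exact Or.inr hXS
    by_cases hXT : X = T
    · exact Or.inl ⟨insert i T, insert_mem_moveTo Q i T, hXT ▸ hinsert⟩
    · exact Or.inl ⟨X.erase i, erase_mem_moveTo hX hXT i, hrest X hX hXS⟩

end merge_move

section order

variable (σ : Equiv.Perm (Fin n))

-- `σ` lists the players by position: `σ m` is the player in position `m`.
def playersFrom (k : ℕ) : Finset (Fin n) :=
  univ.filter fun j => k ≤ (σ.symm j : ℕ)

variable {σ}

@[simp]
lemma mem_playersFrom {k : ℕ} {j : Fin n} : j ∈ playersFrom σ k ↔ k ≤ (σ.symm j : ℕ) := by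
  simp [playersFrom]

lemma playersFrom_zero : playersFrom σ 0 = univ := by
  ext; simp

lemma playersFrom_card : playersFrom σ n = ∅ := by
  ext j; simp [(σ.symm j).is_lt]

lemma playersFrom_anti {k m : ℕ} (h : k ≤ m) : playersFrom σ m ⊆ playersFrom σ k :=
  fun _ hj => mem_playersFrom.2 (h.trans (mem_playersFrom.1 hj))

lemma mem_playersFrom_self {k : ℕ} (hk : k < n) : σ ⟨k, hk⟩ ∈ playersFrom σ k := by
  simp

lemma playersFrom_succ {k : ℕ} (hk : k < n) :
    playersFrom σ (k + 1) = (playersFrom σ k).erase (σ ⟨k, hk⟩) := by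
  ext j
  rw [mem_erase, mem_playersFrom, mem_playersFrom, ne_eq, ← σ.symm_apply_eq, Fin.ext_iff]
  dsimp only
  omega

lemma Cafter_eq_playersFrom (i : Fin n) : Cafter σ i = playersFrom σ (σ.symm i + 1) := by
  ext j
  simp only [Cafter, mem_filter, mem_univ, true_and, mem_playersFrom, Fin.lt_def]
  omega

lemma insert_Cafter_eq_playersFrom (i : Fin n) :
    insert i (Cafter σ i) = playersFrom σ (σ.symm i) := by
  have hk := (σ.symm i).is_lt
  have hσ : σ ⟨σ.symm i, hk⟩ = i := by simp
  rw [Cafter_eq_playersFrom, playersFrom_succ hk, hσ, insert_erase]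
  simp

end order

section weights

variable (w : Weights n) (σ : Equiv.Perm (Fin n))

-- The factor of `pr w σ P` contributed by the player in position `m`.
noncomputable def stepWeight (P : Finset (Finset (Fin n))) (m : ℕ) : ℝ :=
  if h : m < n then w (σ ⟨m, h⟩) (playersFrom σ (m + 1)) (pmerge P (playersFrom σ (m + 1)))
  else 1

noncomputable def tailWeight (k : ℕ) (P : Finset (Finset (Fin n))) : ℝ :=
  ∏ m ∈ Ico k n, stepWeight w σ P m

noncomputable def mergeFiber (k : ℕ) (Q : Finset (Finset (Fin n))) :
    Finset (Finset (Finset (Fin n))) :=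
  (allPartitions n).filter fun P => pmerge P (playersFrom σ k) = Q

variable {w σ} {k : ℕ} {P Q : Finset (Finset (Fin n))}

lemma pr_eq_tailWeight_zero : pr w σ P = tailWeight w σ 0 P := by
  rw [pr, tailWeight, ← range_eq_Ico, ← Fin.prod_univ_eq_prod_range, ← Equiv.prod_comp σ]
  refine prod_congr rfl fun m _ => ?_
  rw [stepWeight, dif_pos m.is_lt, Cafter_eq_playersFrom]
  simp

lemma stepWeight_pmerge (hP : ∅ ∈ P) {m : ℕ} (hm : m < k) :
    stepWeight w σ (pmerge P (playersFrom σ k)) m = stepWeight w σ P m := by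
  rw [stepWeight, stepWeight, pmerge_pmerge hP (playersFrom_anti hm)]

lemma pr_eq_mul_tailWeight (hP : ∅ ∈ P) (hk : k ≤ n) :
    pr w σ P = (∏ m ∈ range k, stepWeight w σ (pmerge P (playersFrom σ k)) m) *
      tailWeight w σ k P := by
  rw [pr_eq_tailWeight_zero, tailWeight, tailWeight, range_eq_Ico,
    ← prod_Ico_consecutive _ k.zero_le hk]
  congr 1
  exact prod_congr rfl fun m hm => (stepWeight_pmerge hP (mem_Ico.1 hm).2).symm

lemma mergeFiber_eq_biUnion (hk : k < n) (hQ : IsPartition Q) (hDQ : playersFrom σ k ∈ Q) :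
    mergeFiber σ k Q = (Q.erase (playersFrom σ k)).biUnion
      fun T => mergeFiber σ (k + 1) (moveTo Q (σ ⟨k, hk⟩) T) := by
  have hi := mem_playersFrom_self (σ := σ) hk
  ext P
  simp only [mergeFiber, mem_biUnion, mem_filter, mem_allPartitions]
  constructor
  · rintro ⟨hP, rfl⟩
    obtain ⟨B, hB, hiB⟩ := hP.exists_mem (σ ⟨k, hk⟩)
    refine ⟨B \ playersFrom σ k, mem_erase.2 ⟨fun h => ?_, sdiff_mem_pmerge hB _⟩, hP, ?_⟩
    · exact (mem_sdiff.1 (h ▸ hi)).2 hi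
    · rw [playersFrom_succ hk, pmerge_erase_eq_moveTo hP hi hB hiB]
  · rintro ⟨T, hT, hP, hPT⟩
    rw [← pmerge_pmerge hP.1 (playersFrom_anti k.le_succ), hPT, pmerge_moveTo hQ hDQ hi hT]
    exact ⟨hP, rfl⟩

lemma sum_mergeFiber_eq_sum_moveTo (hk : k < n) (hQ : IsPartition Q)
    (hDQ : playersFrom σ k ∈ Q) (f : Finset (Finset (Fin n)) → ℝ) :
    ∑ P ∈ mergeFiber σ k Q, f P =
      ∑ T ∈ Q.erase (playersFrom σ k),
        ∑ P ∈ mergeFiber σ (k + 1) (moveTo Q (σ ⟨k, hk⟩) T), f P := by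
  have hiT (T) (hT : T ∈ Q.erase (playersFrom σ k)) : σ ⟨k, hk⟩ ∉ T :=
    hQ.notMem_of_ne hDQ (mem_playersFrom_self hk) (mem_erase.1 hT).2 (mem_erase.1 hT).1
  have hdisj : (Q.erase (playersFrom σ k) : Set (Finset (Fin n))).PairwiseDisjoint
      fun T => mergeFiber σ (k + 1) (moveTo Q (σ ⟨k, hk⟩) T) := fun T hT T' hT' hne =>
    disjoint_left.2 fun P hP hP' => hne <| eq_of_moveTo_eq (hiT T hT) (hiT T' hT')
      ((mem_filter.1 hP).2.symm.trans (mem_filter.1 hP').2)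
  rw [mergeFiber_eq_biUnion hk hQ hDQ, sum_biUnion hdisj]

lemma tailWeight_of_mem_mergeFiber (hk : k < n) (hP : P ∈ mergeFiber σ (k + 1) Q) :
    tailWeight w σ k P =
      w (σ ⟨k, hk⟩) (playersFrom σ (k + 1)) Q * tailWeight w σ (k + 1) P := by
  rw [tailWeight, prod_eq_prod_Ico_succ_bot hk, stepWeight, dif_pos hk, (mem_filter.1 hP).2,
    tailWeight]

lemma playersFrom_succ_mem_moveTo (hk : k < n) (hDQ : playersFrom σ k ∈ Q)
    {T : Finset (Fin n)} (hT : T ∈ Q.erase (playersFrom σ k)) :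
    playersFrom σ (k + 1) ∈ moveTo Q (σ ⟨k, hk⟩) T := by
  rw [playersFrom_succ hk]
  exact erase_mem_moveTo hDQ (mem_erase.1 hT).1.symm _

lemma sum_tailWeight_mergeFiber (hnorm : Normalized w) (hk : k ≤ n) (hQ : IsPartition Q)
    (hDQ : playersFrom σ k ∈ Q) : ∑ P ∈ mergeFiber σ k Q, tailWeight w σ k P = 1 := by
  induction hd : n - k generalizing k Q with
  | zero =>
    obtain rfl : k = n := by omega
    have hfiber : mergeFiber σ k Q = {Q} := by
      ext P
      simp only [mergeFiber, mem_filter, mem_allPartitions, mem_singleton, playersFrom_card]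
      exact ⟨fun ⟨hP, h⟩ => (pmerge_empty hP.1).symm.trans h,
        by rintro rfl; exact ⟨hQ, pmerge_empty hQ.1⟩⟩
    simp [hfiber, tailWeight]
  | succ d ih =>
    have hk : k < n := by omega
    rw [sum_mergeFiber_eq_sum_moveTo hk hQ hDQ, ← hnorm _ _ Q hQ hDQ (mem_playersFrom_self hk)]
    refine sum_congr rfl fun T hT => ?_
    rw [sum_congr rfl fun P hP => tailWeight_of_mem_mergeFiber hk hP, ← mul_sum,
      ih hk (hQ.moveTo (mem_erase.1 hT).2) (playersFrom_succ_mem_moveTo hk hDQ hT) (by omega),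
      mul_one, playersFrom_succ hk]

lemma sum_tailWeight_mul (hnorm : Normalized w) (hk : k < n) (hQ : IsPartition Q)
    (hDQ : playersFrom σ k ∈ Q) (G : Finset (Finset (Fin n)) → ℝ) :
    ∑ P ∈ mergeFiber σ k Q, tailWeight w σ k P * G (pmerge P (playersFrom σ (k + 1))) =
      ∑ T ∈ Q.erase (playersFrom σ k), w (σ ⟨k, hk⟩) (playersFrom σ (k + 1))
        (moveTo Q (σ ⟨k, hk⟩) T) * G (moveTo Q (σ ⟨k, hk⟩) T) := by
  rw [sum_mergeFiber_eq_sum_moveTo hk hQ hDQ]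
  refine sum_congr rfl fun T hT => ?_
  have hfiber : ∀ P ∈ mergeFiber σ (k + 1) (moveTo Q (σ ⟨k, hk⟩) T),
      tailWeight w σ k P * G (pmerge P (playersFrom σ (k + 1))) =
        w (σ ⟨k, hk⟩) (playersFrom σ (k + 1)) (moveTo Q (σ ⟨k, hk⟩) T) *
          G (moveTo Q (σ ⟨k, hk⟩) T) * tailWeight w σ (k + 1) P := fun P hP => by
    rw [tailWeight_of_mem_mergeFiber hk hP, (mem_filter.1 hP).2]
    ring
  rw [sum_congr rfl hfiber, ← mul_sum, sum_tailWeight_mergeFiber hnorm hk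
    (hQ.moveTo (mem_erase.1 hT).2) (playersFrom_succ_mem_moveTo hk hDQ hT), mul_one]

lemma sum_pr (σ : Equiv.Perm (Fin n)) (hnorm : Normalized w) :
    ∑ P ∈ allPartitions n, pr w σ P = 1 := by
  have hfiber : mergeFiber σ 0 (grandPart n) = allPartitions n :=
    filter_true_of_mem fun P hP => by
      rw [playersFrom_zero, pmerge_univ (mem_allPartitions.1 hP).1]
  simp_rw [pr_eq_tailWeight_zero, ← hfiber]
  exact sum_tailWeight_mergeFiber hnorm n.zero_le isPartition_grandPart
    (by simp [playersFrom_zero, grandPart])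

end weights

section esv

variable {w : Weights n}

lemma esv_add (v u : Game n) (i : Fin n) : esv w (v + u) i = esv w v i + esv w u i := by
  simp only [esv, ← mul_add, ← sum_add_distrib, Pi.add_apply]
  congr 1
  refine sum_congr rfl fun σ _ => sum_congr rfl fun P _ => ?_
  ring

lemma sum_marginal_eq_grand (σ : Equiv.Perm (Fin n)) {P : Finset (Finset (Fin n))} (hP : ∅ ∈ P)
    {v : Game n} (hv : IsGame v) :
    ∑ i, (v (insert i (Cafter σ i)) (pmerge P (insert i (Cafter σ i))) -
      v (Cafter σ i) (pmerge P (Cafter σ i))) = v univ (grandPart n) := by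
  let f (m : ℕ) := v (playersFrom σ m) (pmerge P (playersFrom σ m))
  have hf0 : f 0 = v univ (grandPart n) := by simp only [f, playersFrom_zero, pmerge_univ hP]
  have hfn : f n = 0 := hv _ _ (by simp [playersFrom_card])
  simp_rw [insert_Cafter_eq_playersFrom, Cafter_eq_playersFrom]
  rw [← Equiv.sum_comp σ]
  simp_rw [Equiv.symm_apply_apply]
  rw [Fin.sum_univ_eq_sum_range (fun m => f m - f (m + 1)), sum_range_sub', hf0, hfn, sub_zero]

lemma sum_esv (hnorm : Normalized w) {v : Game n} (hv : IsGame v) :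
    ∑ i, esv w v i = v univ (grandPart n) := by
  have hσ (σ : Equiv.Perm (Fin n)) : ∑ i, ∑ P ∈ allPartitions n, pr w σ P *
      (v (insert i (Cafter σ i)) (pmerge P (insert i (Cafter σ i))) -
        v (Cafter σ i) (pmerge P (Cafter σ i))) = v univ (grandPart n) := by
    rw [sum_comm, ← one_mul (v univ _), ← sum_pr σ hnorm, sum_mul]
    refine sum_congr rfl fun P hP => ?_
    rw [← mul_sum, sum_marginal_eq_grand σ (mem_allPartitions.1 hP).1 hv]
  simp only [esv, ← mul_sum]
  rw [sum_comm, sum_congr rfl fun σ _ => hσ σ, sum_const, card_univ, Fintype.card_perm,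
    Fintype.card_fin, nsmul_eq_mul, ← mul_assoc, inv_mul_cancel₀ (by positivity), one_mul]

lemma sum_pr_mul_marginal (hnorm : Normalized w) (σ : Equiv.Perm (Fin n)) (v : Game n)
    {k : ℕ} (hk : k < n) :
    ∑ P ∈ allPartitions n, pr w σ P *
      (v (playersFrom σ k) (pmerge P (playersFrom σ k)) -
        v (playersFrom σ (k + 1)) (pmerge P (playersFrom σ (k + 1)))) =
    ∑ Q ∈ (allPartitions n).image (pmerge · (playersFrom σ k)),
      (∏ m ∈ range k, stepWeight w σ Q m) * mc w v (σ ⟨k, hk⟩) (playersFrom σ k) Q := by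
  rw [← sum_fiberwise_of_maps_to fun P hP => mem_image_of_mem (pmerge · (playersFrom σ k)) hP]
  refine sum_congr rfl fun Q hQ => ?_
  obtain ⟨P₀, hP₀, rfl⟩ := mem_image.1 hQ
  have hQ := (mem_allPartitions.1 hP₀).pmerge (playersFrom σ k)
  have hDQ := mem_pmerge_self P₀ (playersFrom σ k)
  generalize pmerge P₀ (playersFrom σ k) = Q at hQ hDQ ⊢
  change ∑ P ∈ mergeFiber σ k Q, _ = _
  let G (X : Finset (Finset (Fin n))) := v (playersFrom σ k) Q - v (playersFrom σ (k + 1)) X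
  have hsplit : ∀ P ∈ mergeFiber σ k Q,
      pr w σ P * (v (playersFrom σ k) (pmerge P (playersFrom σ k)) -
        v (playersFrom σ (k + 1)) (pmerge P (playersFrom σ (k + 1)))) =
      (∏ m ∈ range k, stepWeight w σ Q m) *
        (tailWeight w σ k P * G (pmerge P (playersFrom σ (k + 1)))) := fun P hP => by
    obtain ⟨hP, hPQ⟩ := mem_filter.1 hP
    rw [pr_eq_mul_tailWeight (mem_allPartitions.1 hP).1 hk.le, hPQ, mul_assoc]
  rw [sum_congr rfl hsplit, ← mul_sum, sum_tailWeight_mul hnorm hk hQ hDQ, mc]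
  simp only [G, playersFrom_succ hk]

lemma esv_eq_zero (hnorm : Normalized w) {v : Game n} {j : Fin n}
    (hmc : ∀ S P, IsPartition P → S ∈ P → j ∈ S → mc w v j S P = 0) : esv w v j = 0 := by
  rw [esv, sum_eq_zero, mul_zero]
  intro σ _
  have hk := (σ.symm j).is_lt
  have hj : σ ⟨σ.symm j, hk⟩ = j := by simp
  rw [insert_Cafter_eq_playersFrom, Cafter_eq_playersFrom, sum_pr_mul_marginal hnorm σ v hk, hj]
  refine sum_eq_zero fun Q hQ => ?_
  obtain ⟨P, hP, rfl⟩ := mem_image.1 hQ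
  rw [hmc _ _ ((mem_allPartitions.1 hP).pmerge _) (mem_pmerge_self _ _) (by simp), mul_zero]

end esv

section symmetry

variable {w : Weights n}

lemma Cafter_mul (π σ : Equiv.Perm (Fin n)) (i : Fin n) :
    Cafter (π * σ) (π i) = (Cafter σ i).image π := by
  ext j
  obtain ⟨j, rfl⟩ := π.surjective j
  simp [Cafter, Equiv.Perm.mul_def]

lemma image_image_perm_symm (π : Equiv.Perm (Fin n)) (P : Finset (Finset (Fin n))) :
    (P.image (Finset.image π)).image (Finset.image π.symm) = P := by
  simp [image_image, Function.comp_def]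

lemma pr_mul (hsym : ∀ (π : Equiv.Perm (Fin n)) (i : Fin n) S P, i ∉ S →
      w i S P = w (π i) (S.image π) (P.image (Finset.image π)))
    (π σ : Equiv.Perm (Fin n)) (P : Finset (Finset (Fin n))) :
    pr w (π * σ) (P.image (Finset.image π)) = pr w σ P := by
  rw [pr, ← Equiv.prod_comp π]
  refine prod_congr rfl fun i _ => ?_
  rw [Cafter_mul, pmerge_image, ← hsym π i _ _ (by simp [Cafter])]

lemma esv_permGame (hsym : ∀ (π : Equiv.Perm (Fin n)) (i : Fin n) S P, i ∉ S →
      w i S P = w (π i) (S.image π) (P.image (Finset.image π)))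
    (π : Equiv.Perm (Fin n)) (v : Game n) (i : Fin n) :
    esv w (permGame π v) i = esv w v (π i) := by
  rw [esv, esv]
  congr 1
  conv_rhs => rw [← Equiv.sum_comp (Equiv.mulLeft π)]
  refine sum_congr rfl fun σ _ => ?_
  refine sum_nbij' (Finset.image (Finset.image π)) (Finset.image (Finset.image π.symm))
    (fun P hP => ?_) (fun P hP => ?_) (fun P _ => image_image_perm_symm π P)
    (fun P _ => by simpa using image_image_perm_symm π.symm P) (fun P _ => ?_)
  · simpa [mem_allPartitions] using (mem_allPartitions.1 hP).image π
  · simpa [mem_allPartitions] using (mem_allPartitions.1 hP).image π.symm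
  · rw [Equiv.coe_mulLeft, pr_mul hsym, Cafter_mul, ← image_insert, pmerge_image, pmerge_image]
    rfl

end symmetry

section simpleGames

variable {w : Weights n} {i : Fin n} {S : Finset (Fin n)} {P : Finset (Finset (Fin n))}

def gameSubmodule (n : ℕ) : Submodule ℝ (Game n) where
  carrier := {v | IsGame v}
  add_mem' hv hu S P h := by simp [hv S P h, hu S P h]
  zero_mem' _ _ _ := rfl
  smul_mem' c _ hv S P h := by simp [hv S P h]

lemma isGame_sgame {S₀ : Finset (Fin n)} {P₀ : Finset (Finset (Fin n))} (hP₀ : IsPartition P₀)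
    (hS₀ : S₀ ∈ P₀) (hne : S₀ ≠ ∅) : IsGame (sgame S₀ P₀) := by
  intro S P h
  rw [sgame, if_neg]
  rintro ⟨rfl, rfl⟩
  exact h ⟨hP₀, hS₀, hne⟩

lemma mc_sub (v u : Game n) : mc w (v - u) i S P = mc w v i S P - mc w u i S P := by
  simp only [mc, Pi.sub_apply, ← sum_sub_distrib]
  exact sum_congr rfl fun _ _ => by ring

lemma mc_smul (c : ℝ) (v : Game n) : mc w (c • v) i S P = c * mc w v i S P := by
  simp only [mc, Pi.smul_apply, smul_eq_mul, mul_sum]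
  exact sum_congr rfl fun _ _ => by ring

lemma mc_sum {ι : Type*} (s : Finset ι) (g : ι → Game n) :
    mc w (∑ a ∈ s, g a) i S P = ∑ a ∈ s, mc w (g a) i S P := by
  simp only [mc, Finset.sum_apply, ← sum_sub_distrib, mul_sum]
  exact sum_comm

lemma mc_sgame (hnorm : Normalized w) {S₀ : Finset (Fin n)} {P₀ : Finset (Finset (Fin n))}
    (hP : IsPartition P) (hS : S ∈ P) (hi : i ∈ S) (hcard : S.card ≤ S₀.card) :
    mc w (sgame S₀ P₀) i S P = if S = S₀ ∧ P = P₀ then 1 else 0 := by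
  have hsmall (T : Finset (Fin n)) : sgame S₀ P₀ (S.erase i) (moveTo P i T) = 0 := by
    rw [sgame, if_neg]
    rintro ⟨h, -⟩
    have := card_erase_of_mem hi ▸ congrArg card h
    have := card_pos.2 ⟨i, hi⟩
    omega
  simp only [mc, hsmall, sub_zero]
  split_ifs with h
  · simp only [sgame, if_pos h, mul_one]
    exact hnorm i S P hP hS hi
  · simp [sgame, if_neg h]

lemma permGame_smul (π : Equiv.Perm (Fin n)) (c : ℝ) (v : Game n) :
    permGame π (c • v) = c • permGame π v := rfl

lemma permGame_sgame (π : Equiv.Perm (Fin n)) (S₀ : Finset (Fin n))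
    (P₀ : Finset (Finset (Fin n))) :
    permGame π (sgame S₀ P₀) = sgame (S₀.image π.symm) (P₀.image (Finset.image π.symm)) := by
  funext S P
  simp only [permGame, sgame]
  congr 1
  apply propext
  constructor <;> rintro ⟨rfl, rfl⟩ <;> simp [image_image, Function.comp_def]

lemma image_swap_of_mem_iff {B : Finset (Fin n)} {j k : Fin n} (h : j ∈ B ↔ k ∈ B) :
    B.image (Equiv.swap j k) = B := by
  ext a
  simp only [mem_image]
  grind

lemma permGame_swap_sgame {S₀ : Finset (Fin n)} {P₀ : Finset (Finset (Fin n))}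
    (hP₀ : IsPartition P₀) (hS₀ : S₀ ∈ P₀) {j k : Fin n} (hj : j ∈ S₀) (hk : k ∈ S₀) :
    permGame (Equiv.swap j k) (sgame S₀ P₀) = sgame S₀ P₀ := by
  have hB : ∀ B ∈ P₀, B.image (Equiv.swap j k) = B := fun B hB => by
    refine image_swap_of_mem_iff ?_
    by_cases h : B = S₀
    · simp [h, hj, hk]
    · simp [hP₀.notMem_of_ne hS₀ hj hB h, hP₀.notMem_of_ne hS₀ hk hB h]
  rw [permGame_sgame, Equiv.symm_swap, hB S₀ hS₀, image_congr hB, image_id']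

end simpleGames

section uniqueness

def MarginalsVanishBelow (w : Weights n) (v : Game n) (i : Fin n) (r : ℕ) : Prop :=
  ∀ S P, IsPartition P → S ∈ P → i ∈ S → S.card < r → mc w v i S P = 0

noncomputable def levelCoalitions (i : Fin n) (r : ℕ) :
    Finset (Finset (Fin n) × Finset (Finset (Fin n))) :=
  univ.filter fun p => IsPartition p.2 ∧ p.1 ∈ p.2 ∧ i ∈ p.1 ∧ p.1.card = r

variable {w : Weights n}

lemma map_sum_of_add (F : Game n → ℝ)
    (hadd : ∀ v u, IsGame v → IsGame u → F (v + u) = F v + F u)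
    {ι : Type*} (s : Finset ι) (g : ι → Game n) (hg : ∀ a ∈ s, IsGame (g a)) :
    F (∑ a ∈ s, g a) = ∑ a ∈ s, F (g a) := by
  induction s using Finset.cons_induction with
  | empty =>
    have := hadd 0 0 (gameSubmodule n).zero_mem (gameSubmodule n).zero_mem
    simpa using this
  | cons a s ha ih =>
    rw [sum_cons, sum_cons, hadd _ _ (hg a (mem_cons_self a s))
      ((gameSubmodule n).sum_mem fun b hb => hg b (mem_cons_of_mem hb)),
      ih fun b hb => hg b (mem_cons_of_mem hb)]

lemma MarginalsVanishBelow.sub_sum_smul_sgame (hnorm : Normalized w) {v : Game n} {i : Fin n}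
    {r : ℕ} (hv : MarginalsVanishBelow w v i r) :
    MarginalsVanishBelow w
      (v - ∑ p ∈ levelCoalitions i r, mc w v i p.1 p.2 • sgame p.1 p.2) i (r + 1) := by
  intro S P hP hS hi hcard
  have hmem : (S, P) ∈ levelCoalitions i r ↔ S.card = r := by
    simp [levelCoalitions, hP, hS, hi]
  have hterm : ∀ p ∈ levelCoalitions i r, mc w (mc w v i p.1 p.2 • sgame p.1 p.2) i S P =
      if (S, P) = p then mc w v i S P else 0 := fun p hp => by
    have hp := (mem_filter.1 hp).2.2.2.2
    rw [mc_smul, mc_sgame hnorm hP hS hi (by omega)]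
    obtain ⟨S₀, P₀⟩ := p
    simp only [Prod.mk.injEq]
    split_ifs with h
    · rw [h.1, h.2, mul_one]
    · exact mul_zero _
  rw [mc_sub, mc_sum, sum_congr rfl hterm, sum_ite_eq]
  split_ifs with h
  · exact sub_self _
  · have hlt : S.card < r := by
      have := mt hmem.2 h
      omega
    rw [hv S P hP hS hi hlt, sub_zero]

variable (ψ : Game n → Fin n → ℝ)

lemma apply_smul_sgame_eq_zero (hnorm : Normalized w) (hsum : ∀ v, IsGame v → ∑ i, ψ v i = 0)
    (hperm : ∀ v, IsGame v → ∀ π i, ψ (permGame π v) i = ψ v (π i)) {r : ℕ}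
    (hnext : ∀ v, IsGame v → ∀ i, MarginalsVanishBelow w v i (r + 1) → ψ v i = 0)
    {S₀ : Finset (Fin n)} {P₀ : Finset (Finset (Fin n))} (hP₀ : IsPartition P₀)
    (hS₀ : S₀ ∈ P₀) (hcard : S₀.card = r) {j : Fin n} (hj : j ∈ S₀) (c : ℝ) :
    ψ (c • sgame S₀ P₀) j = 0 := by
  set e := c • sgame S₀ P₀
  have he : IsGame e :=
    (gameSubmodule n).smul_mem c (isGame_sgame hP₀ hS₀ (ne_empty_of_mem hj))
  have houter : ∀ k ∉ S₀, ψ e k = 0 := fun k hk => hnext e he k fun S P hP hS hkS hcardS => by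
    rw [mc_smul, mc_sgame hnorm hP hS hkS (by omega),
      if_neg fun h : S = S₀ ∧ P = P₀ => hk (h.1 ▸ hkS), mul_zero]
  have hinner : ∀ k ∈ S₀, ψ e k = ψ e j := fun k hk => by
    have hfix : permGame (Equiv.swap j k) e = e := by
      rw [permGame_smul, permGame_swap_sgame hP₀ hS₀ hj hk]
    have := hperm e he (Equiv.swap j k) j
    rwa [hfix, Equiv.swap_apply_left, eq_comm] at this
  have hcard_mul : S₀.card * ψ e j = 0 := by
    rw [← hsum e he, ← sum_subset (subset_univ S₀) fun k _ hk => houter k hk,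
      sum_congr rfl hinner, sum_const, nsmul_eq_mul]
  exact (mul_eq_zero.1 hcard_mul).resolve_left (by simpa using ne_empty_of_mem hj)

lemma eq_zero_of_level_succ (hnorm : Normalized w) (hsum : ∀ v, IsGame v → ∑ i, ψ v i = 0)
    (hperm : ∀ v, IsGame v → ∀ π i, ψ (permGame π v) i = ψ v (π i))
    (hadd : ∀ v u, IsGame v → IsGame u → ∀ i, ψ (v + u) i = ψ v i + ψ u i) {r : ℕ}
    (hnext : ∀ v, IsGame v → ∀ i, MarginalsVanishBelow w v i (r + 1) → ψ v i = 0)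
    {v : Game n} (hv : IsGame v) {i : Fin n} (hvi : MarginalsVanishBelow w v i r) :
    ψ v i = 0 := by
  set u := ∑ p ∈ levelCoalitions i r, mc w v i p.1 p.2 • sgame p.1 p.2
  have hmem {p} (hp : p ∈ levelCoalitions i r) := (mem_filter.1 hp).2
  have hgame : ∀ p ∈ levelCoalitions i r, IsGame (mc w v i p.1 p.2 • sgame p.1 p.2) :=
    fun p hp => (gameSubmodule n).smul_mem _
      (isGame_sgame (hmem hp).1 (hmem hp).2.1 (ne_empty_of_mem (hmem hp).2.2.1))
  have hu : IsGame u := (gameSubmodule n).sum_mem hgame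
  have hψu : ψ u i = 0 := by
    rw [map_sum_of_add (ψ · i) (fun v u hv hu => hadd v u hv hu i) _ _ hgame]
    exact sum_eq_zero fun p hp => apply_smul_sgame_eq_zero ψ hnorm hsum hperm hnext
      (hmem hp).1 (hmem hp).2.1 (hmem hp).2.2.2 (hmem hp).2.2.1 _
  have hvu : IsGame (v - u) := (gameSubmodule n).sub_mem hv hu
  rw [← sub_add_cancel v u, hadd _ _ hvu hu, hψu, add_zero]
  exact hnext _ hvu i (hvi.sub_sum_smul_sgame hnorm)

theorem eq_zero_of_axioms (hnorm : Normalized w) (hsum : ∀ v, IsGame v → ∑ i, ψ v i = 0)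
    (hperm : ∀ v, IsGame v → ∀ π i, ψ (permGame π v) i = ψ v (π i))
    (hadd : ∀ v u, IsGame v → IsGame u → ∀ i, ψ (v + u) i = ψ v i + ψ u i)
    (hnull : ∀ v, IsGame v → ∀ i,
      (∀ S P, IsPartition P → S ∈ P → i ∈ S → mc w v i S P = 0) → ψ v i = 0)
    {v : Game n} (hv : IsGame v) (i : Fin n) : ψ v i = 0 := by
  suffices ∀ r, ∀ v, IsGame v → ∀ i, MarginalsVanishBelow w v i r → ψ v i = 0 from
    this 0 v hv i fun _ _ _ _ _ h => absurd h (Nat.not_lt_zero _)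
  intro r
  induction hd : n + 1 - r generalizing r with
  | zero =>
    intro v hv i hvi
    refine hnull v hv i fun S P hP hS hi => hvi S P hP hS hi ?_
    have := (card_le_univ S).trans_eq (Fintype.card_fin n)
    omega
  | succ d ih =>
    exact fun v hv i hvi =>
      eq_zero_of_level_succ ψ hnorm hsum hperm hadd (ih (r + 1) (by omega)) hv hvi

end uniqueness

theorem stmt9_general (n : ℕ) (w : Weights n)
    (hsym : ∀ (π : Equiv.Perm (Fin n)) (i : Fin n) S P, i ∉ S →
      w i S P = w (π i) (S.image π) (P.image (Finset.image π)))
    (hnorm : Normalized w)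
    (φ : Game n → Fin n → ℝ)
    (heff : ∀ v, IsGame v → ∑ i : Fin n, φ v i = v Finset.univ (grandPart n))
    (hsymm : ∀ v, IsGame v → ∀ (π : Equiv.Perm (Fin n)) (i : Fin n),
      φ (permGame π v) i = φ v (π i))
    (hadd : ∀ v₁ v₂, IsGame v₁ → IsGame v₂ → ∀ i : Fin n,
      φ (fun S P => v₁ S P + v₂ S P) i = φ v₁ i + φ v₂ i)
    (hnull : ∀ v, IsGame v → ∀ i : Fin n,
      (∀ S P, IsPartition P → S ∈ P → i ∈ S → mc w v i S P = 0) → φ v i = 0) :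
    ∀ v, IsGame v → ∀ i : Fin n, φ v i = esv w v i := by
  intro v hv i
  refine sub_eq_zero.1 (eq_zero_of_axioms (fun v i => φ v i - esv w v i) hnorm ?_ ?_ ?_ ?_ hv i)
  · intro v hv
    rw [sum_sub_distrib, heff v hv, sum_esv hnorm hv, sub_self]
  · intro v hv π i
    rw [hsymm v hv, esv_permGame hsym]
  · intro v u hv hu i
    rw [esv_add, ← add_sub_add_comm, ← hadd v u hv hu i]
    rfl
  · intro v hv i hi
    rw [hnull v hv i hi, esv_eq_zero hnorm hi, sub_zero]

/-- Uniqueness: any value satisfying Efficiency, Symmetry, Additivity and the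
Null-Player Axiom with respect to `α`-marginality coincides with `φ^α`. -/
theorem stmt9 (n : ℕ) (w : Weights n) (hr : InRange w)
    (hsym : ∀ (π : Equiv.Perm (Fin n)) (i : Fin n) S P, i ∉ S →
      w i S P = w (π i) (S.image π) (P.image (Finset.image π)))
    (hnorm : Normalized w)
    (φ : Game n → Fin n → ℝ)
    (heff : ∀ v, IsGame v → ∑ i : Fin n, φ v i = v Finset.univ (grandPart n))
    (hsymm : ∀ v, IsGame v → ∀ (π : Equiv.Perm (Fin n)) (i : Fin n),
      φ (permGame π v) i = φ v (π i))
    (hadd : ∀ v₁ v₂, IsGame v₁ → IsGame v₂ → ∀ i : Fin n,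
      φ (fun S P => v₁ S P + v₂ S P) i = φ v₁ i + φ v₂ i)
    (hnull : ∀ v, IsGame v → ∀ i : Fin n,
      (∀ S P, IsPartition P → S ∈ P → i ∈ S → mc w v i S P = 0) → φ v i = 0) :
    ∀ v, IsGame v → ∀ i : Fin n, φ v i = esv w v i :=
  stmt9_general n w hsym hnorm φ heff hsymm hadd hnull
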